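/- Let α ∈ [0,π/2], c₁, c₂, c₃ ∈ ℂ ⊂ ℍ, and t ≥ 0 real; set κ₁ = c₁ + t·j and κ₂ = c₂ + c₃·j, and assume Re(κ₁κ̄₂) ≤ 0, Re(κ₂) ≤ 0, κ₁ ≠ 0 and κ₂ ≠ 0. Define D = 1 + |κ₁|² + |κ₂|² − 2Re(κ₁) + 2Re(κ₂e^{−iα}) + 2Re(κ̄₁κ₂e^{iα}). Say the data is realizable in dimension n if there exist null vectors n₁, n₂, n₃, n₄ ∈ ℍ^{n+1} with ⟨n₁,n₂⟩ = ⟨n₂,n₃⟩ = ⟨n₃,n₄⟩ = 1, ⟨n₁,n₃⟩ = −e^{iα}, ⟨n₁,n₄⟩ = κ₁ and ⟨n₂,n₄⟩ = κ₂. Then: (a) for n = 2, the data is realizable if and only if D = 0; (b) for n > 2, the data is realizable if and only if D ≤ 0, and for any realizing quadruple n₁,…,n₄ one has D = 0 if and only if there exist λ₁, λ₂, λ₃, λ₄ ∈ ℍ, not all zero, with n₁λ₁ + n₂λ₂ + n₃λ₃ + n₄λ₄ = 0. -/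

import Mathlib

open scoped Quaternion

noncomputable section

/-- The quaternionic Hermitian form of signature (n,1) on ℍ^{n+1}:
`⟨z,w⟩ = w̄₁ z_{n+1} + Σ_{i=2}^n w̄ᵢ zᵢ + w̄_{n+1} z₁`. -/
noncomputable def herm {n : ℕ} (z w : Fin (n+1) → ℍ[ℝ]) : ℍ[ℝ] :=
  star (w 0) * z (Fin.last n)
    + ∑ i ∈ Finset.Ioo (0 : Fin (n+1)) (Fin.last n), star (w i) * z i
    + star (w (Fin.last n)) * z 0

/-- `w` is (right-)proportional to `z`: `w = zλ` for some `λ ∈ ℍ`. -/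
def Prp {n : ℕ} (z w : Fin (n+1) → ℍ[ℝ]) : Prop :=
  ∃ lam : ℍ[ℝ], w = fun i => z i * lam

/-- Right scalar multiplication on ℍ^{n+1}. -/
noncomputable def smulR {n : ℕ} (z : Fin (n+1) → ℍ[ℝ]) (lam : ℍ[ℝ]) :
    Fin (n+1) → ℍ[ℝ] := fun i => z i * lam

/-- The quaternionic triple product `⟨p₁,p₂,p₃⟩ = ⟨p₂,p₁⟩⟨p₃,p₂⟩⟨p₁,p₃⟩`. -/
noncomputable def tri {n : ℕ} (p₁ p₂ p₃ : Fin (n+1) → ℍ[ℝ]) : ℍ[ℝ] :=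
  herm p₂ p₁ * herm p₃ p₂ * herm p₁ p₃

/-- The quaternionic Cartan angular invariant
`𝔸(p₁,p₂,p₃) = arccos(Re(−⟨p₁,p₂,p₃⟩)/|⟨p₁,p₂,p₃⟩|)`. -/
noncomputable def cartan {n : ℕ} (p₁ p₂ p₃ : Fin (n+1) → ℍ[ℝ]) : ℝ :=
  Real.arccos ((-(tri p₁ p₂ p₃)).re / ‖tri p₁ p₂ p₃‖)

/-- The quaternionic cross-ratio `𝕏(p₁,p₂,p₃,p₄) = ⟨p₃,p₁⟩⟨p₃,p₂⟩⁻¹⟨p₄,p₂⟩⟨p₄,p₁⟩⁻¹`. -/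
noncomputable def crossX {n : ℕ} (p₁ p₂ p₃ p₄ : Fin (n+1) → ℍ[ℝ]) : ℍ[ℝ] :=
  herm p₃ p₁ * (herm p₃ p₂)⁻¹ * herm p₄ p₂ * (herm p₄ p₁)⁻¹

/-- The group Sp(n,1) of quaternionic matrices preserving the Hermitian form. -/
def SpGrp (n : ℕ) : Set (Matrix (Fin (n+1)) (Fin (n+1)) ℍ[ℝ]) :=
  {g | ∀ z w : Fin (n+1) → ℍ[ℝ], herm (g.mulVec z) (g.mulVec w) = herm z w}

/-- Similarity of quaternions: `b = μ a μ⁻¹` for some nonzero `μ`. -/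
def QSim (a b : ℍ[ℝ]) : Prop := ∃ mu : ℍ[ℝ], mu ≠ 0 ∧ b = mu * a * mu⁻¹

/-- The embedding `ℂ = ℝ ⊕ ℝi ⊂ ℍ`. -/
noncomputable def cq (c : ℂ) : ℍ[ℝ] := ⟨c.re, c.im, 0, 0⟩

/-- The imaginary unit `j ∈ ℍ`. -/
noncomputable def jj : ℍ[ℝ] := ⟨0, 0, 1, 0⟩

/-- `e^{iα} = cos α + i sin α ∈ ℍ`. -/
noncomputable def eI (α : ℝ) : ℍ[ℝ] := ⟨Real.cos α, Real.sin α, 0, 0⟩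

/-- The data `(α, κ₁, κ₂)` is realizable in dimension `n`: there is a quadruple of null
vectors in `ℍ^{n+1}` whose normalised Gram matrix has the prescribed entries. -/
def Realizable (n : ℕ) (α : ℝ) (κ₁ κ₂ : ℍ[ℝ]) : Prop :=
  ∃ m : Fin 4 → Fin (n+1) → ℍ[ℝ],
    (∀ i, m i ≠ 0) ∧ (∀ i, herm (m i) (m i) = 0) ∧
    herm (m 0) (m 1) = 1 ∧ herm (m 1) (m 2) = 1 ∧ herm (m 2) (m 3) = 1 ∧
    herm (m 0) (m 2) = -(eI α) ∧ herm (m 0) (m 3) = κ₁ ∧ herm (m 1) (m 3) = κ₂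

/-!
In a realizing quadruple, `n₂, n₃` form a hyperbolic pair; as the form has signature `(n,1)`, its
orthogonal complement is positive definite. Projecting `n₁` and `n₄` to that complement gives
`u, v` with `⟨u,u⟩ = 2 cos α`, `⟨v,v⟩ = -2 Re κ₂`, `⟨u,v⟩ = κ₁ + κ₂e^{iα} - 1`, and then
`D = |⟨u,v⟩|² - ⟨u,u⟩⟨v,v⟩`. So `D ≤ 0` is Cauchy–Schwarz in the complement, with equality iff
`u, v` (equivalently `n₁, …, n₄`) are right-linearly dependent, which four vectors of `ℍ³` always
are. Conversely, with `n₂, n₃` on the two null coordinate axes, a quadruple exists as soon as the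
`2 × 2` Gram matrix of `u, v` is realized in the `n - 1` middle coordinates: with two of them this
needs only `D ≤ 0`, with one it needs `D = 0`.
-/

open MulOpposite Quaternion

section

variable {n : ℕ}

@[simp]
theorem herm_zero_left (w : Fin (n+1) → ℍ[ℝ]) : herm 0 w = 0 := by
  simp [herm]

theorem herm_star (z w : Fin (n+1) → ℍ[ℝ]) : star (herm z w) = herm w z := by
  simp only [herm, star_add, star_mul, star_star, star_sum]
  abel

@[simp]
theorem herm_add_left (z z' w : Fin (n+1) → ℍ[ℝ]) : herm (z + z') w = herm z w + herm z' w := by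
  simp only [herm, Pi.add_apply, mul_add, Finset.sum_add_distrib]
  abel

@[simp]
theorem herm_sub_left (z z' w : Fin (n+1) → ℍ[ℝ]) : herm (z - z') w = herm z w - herm z' w := by
  simp only [herm, Pi.sub_apply, mul_sub, Finset.sum_sub_distrib]
  abel

-- Right scalar multiplication `z ↦ z c` is the action `op c • z` of `ℍᵐᵒᵖ`.
@[simp]
theorem herm_smul_left (z w : Fin (n+1) → ℍ[ℝ]) (c : ℍ[ℝ]) :
    herm (op c • z) w = herm z w * c := by
  simp only [herm, Pi.smul_apply, op_smul_eq_mul, add_mul, Finset.sum_mul, mul_assoc]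

@[simp]
theorem herm_zero_right (z : Fin (n+1) → ℍ[ℝ]) : herm z 0 = 0 := by
  rw [← herm_star, herm_zero_left, star_zero]

@[simp]
theorem herm_add_right (z w w' : Fin (n+1) → ℍ[ℝ]) : herm z (w + w') = herm z w + herm z w' := by
  rw [← herm_star, herm_add_left, star_add, herm_star, herm_star]

@[simp]
theorem herm_sub_right (z w w' : Fin (n+1) → ℍ[ℝ]) : herm z (w - w') = herm z w - herm z w' := by
  rw [← herm_star, herm_sub_left, star_sub, herm_star, herm_star]

@[simp]
theorem herm_smul_right (z w : Fin (n+1) → ℍ[ℝ]) (c : ℍ[ℝ]) :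
    herm z (op c • w) = star c * herm z w := by
  rw [← herm_star, herm_smul_left, star_mul, herm_star]

theorem herm_self_eq_coe_re (z : Fin (n+1) → ℍ[ℝ]) : herm z z = ((herm z z).re : ℍ[ℝ]) :=
  star_eq_self.mp (herm_star z z)

/-- The positive definite part `Σ_{i=2}^n w̄ᵢ zᵢ` of `herm`. -/
def hermMid (z w : Fin (n+1) → ℍ[ℝ]) : ℍ[ℝ] :=
  ∑ i ∈ Finset.Ioo 0 (Fin.last n), star (w i) * z i

theorem herm_eq_hermMid (z w : Fin (n+1) → ℍ[ℝ]) :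
    herm z w = star (w 0) * z (Fin.last n) + hermMid z w + star (w (Fin.last n)) * z 0 :=
  rfl

@[simp]
theorem hermMid_zero_left (w : Fin (n+1) → ℍ[ℝ]) : hermMid 0 w = 0 := by
  simp [hermMid]

@[simp]
theorem hermMid_zero_right (z : Fin (n+1) → ℍ[ℝ]) : hermMid z 0 = 0 := by
  simp [hermMid]

theorem hermMid_add_left (z z' w : Fin (n+1) → ℍ[ℝ]) :
    hermMid (z + z') w = hermMid z w + hermMid z' w := by
  simp only [hermMid, Pi.add_apply, mul_add, Finset.sum_add_distrib]

theorem hermMid_add_right (z w w' : Fin (n+1) → ℍ[ℝ]) :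
    hermMid z (w + w') = hermMid z w + hermMid z w' := by
  simp only [hermMid, Pi.add_apply, star_add, add_mul, Finset.sum_add_distrib]

theorem hermMid_single_single {i j : Fin (n+1)} (hi : i ∈ Finset.Ioo 0 (Fin.last n))
    (p q : ℍ[ℝ]) : hermMid (Pi.single i p) (Pi.single j q) = if i = j then star q * p else 0 := by
  rw [hermMid, Finset.sum_eq_single_of_mem i hi fun k _ hk => by simp [hk]]
  split_ifs with h
  · simp [h]
  · simp [Ne.symm h]

theorem herm_self_of_apply_zero {z : Fin (n+1) → ℍ[ℝ]} (hz : z 0 = 0) :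
    herm z z = ((∑ i ∈ Finset.Ioo 0 (Fin.last n), normSq (z i) : ℝ) : ℍ[ℝ]) := by
  rw [herm_eq_hermMid, hz, hermMid]
  simp only [star_mul_self, ← algebraMap_def, map_sum]
  simp

section CauchySchwarz

variable {u v : Fin (n+1) → ℍ[ℝ]} {A B : ℝ} (hA : herm u u = A) (hB : herm v v = B)
include hA hB

theorem herm_self_smul_sub_smul :
    herm (op (A : ℍ[ℝ]) • v - op (star (herm u v)) • u)
        (op (A : ℍ[ℝ]) • v - op (star (herm u v)) • u)
      = ((A * (A * B - normSq (herm u v)) : ℝ) : ℍ[ℝ]) := by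
  simp only [herm_sub_left, herm_sub_right, herm_smul_left, herm_smul_right, star_star,
    ← herm_star u v, hA, hB]
  ext <;> simp [normSq_def] <;> ring

theorem normSq_herm_eq_of_dependent {c d : ℍ[ℝ]} (hcd : c ≠ 0 ∨ d ≠ 0)
    (h : op c • u + op d • v = 0) : normSq (herm u v) = A * B := by
  set s := herm u v
  have hu : A * c + star s * d = 0 := by
    simpa [← herm_star u v, hA] using congrArg (herm · u) h
  have hv : s * c + B * d = 0 := by
    simpa [hB] using congrArg (herm · v) h
  have hc : ((normSq s - A * B : ℝ) : ℍ[ℝ]) * c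
      = star s * (s * c + B * d) - B * (A * c + star s * d) := by
    ext <;> simp [normSq_def] <;> ring
  have hd : ((normSq s - A * B : ℝ) : ℍ[ℝ]) * d
      = s * (A * c + star s * d) - A * (s * c + B * d) := by
    ext <;> simp [normSq_def] <;> ring
  simp only [hu, hv, mul_zero, sub_zero] at hc hd
  by_contra hne
  have hne' : ((normSq s - A * B : ℝ) : ℍ[ℝ]) ≠ 0 := by
    rw [Ne, ← coe_zero, coe_inj, sub_eq_zero]
    exact hne
  rcases hcd with hc0 | hd0
  · exact hc0 ((mul_eq_zero.mp hc).resolve_left hne')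
  · exact hd0 ((mul_eq_zero.mp hd).resolve_left hne')

end CauchySchwarz

structure IsHyperbolicPair (m₁ m₂ : Fin (n+1) → ℍ[ℝ]) : Prop where
  null_fst : herm m₁ m₁ = 0
  null_snd : herm m₂ m₂ = 0
  herm_eq_one : herm m₁ m₂ = 1

/-- The orthogonal projection to the complement of a hyperbolic pair `m₁, m₂`. -/
def orthProj (m₁ m₂ z : Fin (n+1) → ℍ[ℝ]) : Fin (n+1) → ℍ[ℝ] :=
  z - op (herm z m₂) • m₁ - op (herm z m₁) • m₂

namespace IsHyperbolicPair

variable {m₁ m₂ : Fin (n+1) → ℍ[ℝ]} (hp : IsHyperbolicPair m₁ m₂)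
include hp

theorem herm_swap_eq_one : herm m₂ m₁ = 1 := by
  rw [← herm_star, hp.herm_eq_one, star_one]

theorem herm_sub_self : herm (m₁ - m₂) (m₁ - m₂) = ((-2 : ℝ) : ℍ[ℝ]) := by
  simp only [herm_sub_left, herm_sub_right, hp.null_fst, hp.null_snd, hp.herm_eq_one,
    hp.herm_swap_eq_one]
  rw [show (-2 : ℝ) = -(1 + 1) by norm_num, coe_neg, coe_add, coe_one]
  abel

theorem sub_apply_zero_ne_zero : (m₁ - m₂) 0 ≠ 0 := fun h => by
  have h' := congrArg QuaternionAlgebra.re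
    ((herm_self_of_apply_zero h).symm.trans hp.herm_sub_self)
  simp only [re_coe] at h'
  have : (0 : ℝ) ≤ ∑ i ∈ Finset.Ioo 0 (Fin.last n), normSq ((m₁ - m₂) i) :=
    Finset.sum_nonneg fun i _ => normSq_nonneg
  linarith

theorem herm_orthProj_fst (z : Fin (n+1) → ℍ[ℝ]) : herm (orthProj m₁ m₂ z) m₁ = 0 := by
  simp [orthProj, hp.null_fst, hp.herm_swap_eq_one]

theorem herm_orthProj_snd (z : Fin (n+1) → ℍ[ℝ]) : herm (orthProj m₁ m₂ z) m₂ = 0 := by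
  simp [orthProj, hp.null_snd, hp.herm_eq_one]

theorem herm_orthProj_orthProj (z z' : Fin (n+1) → ℍ[ℝ]) :
    herm (orthProj m₁ m₂ z) (orthProj m₁ m₂ z')
      = herm z z' - herm m₁ z' * herm z m₂ - herm m₂ z' * herm z m₁ := by
  conv_lhs => rw [orthProj.eq_def m₁ m₂ z']
  simp only [herm_sub_right, herm_smul_right, hp.herm_orthProj_fst, hp.herm_orthProj_snd,
    mul_zero, sub_zero]
  simp [orthProj]

theorem add_smul_add_smul_eq_zero_iff {y : Fin (n+1) → ℍ[ℝ]} (hy₁ : herm y m₁ = 0)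
    (hy₂ : herm y m₂ = 0) (a b : ℍ[ℝ]) :
    y + op a • m₁ + op b • m₂ = 0 ↔ y = 0 ∧ a = 0 ∧ b = 0 := by
  refine ⟨fun h => ?_, fun ⟨hy, ha, hb⟩ => by simp [hy, ha, hb]⟩
  have ha : a = 0 := by
    simpa [hy₂, hp.null_snd, hp.herm_eq_one] using congrArg (herm · m₂) h
  have hb : b = 0 := by
    simpa [hy₁, hp.null_fst, hp.herm_swap_eq_one] using congrArg (herm · m₁) h
  exact ⟨by simpa [ha, hb] using h, ha, hb⟩

section Orthogonal

variable {z : Fin (n+1) → ℍ[ℝ]} (hz₁ : herm z m₁ = 0) (hz₂ : herm z m₂ = 0)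
include hz₁ hz₂

/-- Moving `z` along the negative vector `m₁ - m₂` until its first coordinate vanishes lands
where the form is a sum of squares, and only decreases `⟨z, z⟩`. -/
theorem exists_re_herm_self_eq : ∃ c : ℍ[ℝ], z 0 + (m₁ - m₂) 0 * c = 0 ∧
    (herm z z).re = ∑ i ∈ Finset.Ioo 0 (Fin.last n), normSq ((z + op c • (m₁ - m₂)) i)
      + 2 * normSq c := by
  set c := -(((m₁ - m₂) 0)⁻¹ * z 0)
  have hc : z 0 + (m₁ - m₂) 0 * c = 0 := by
    rw [mul_neg, mul_inv_cancel_left₀ hp.sub_apply_zero_ne_zero, add_neg_cancel]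
  refine ⟨c, hc, ?_⟩
  have hzw : herm z (m₁ - m₂) = 0 := by rw [herm_sub_right, hz₁, hz₂, sub_zero]
  have hwz : herm (m₁ - m₂) z = 0 := by rw [← herm_star, hzw, star_zero]
  have hshift := herm_self_of_apply_zero (z := z + op c • (m₁ - m₂)) (by simpa using hc)
  simp only [herm_add_left, herm_add_right, herm_smul_left, herm_smul_right, hzw, hwz,
    hp.herm_sub_self] at hshift
  have hneg : star c * ((-2 : ℝ) * c) = ((-2 * normSq c : ℝ) : ℍ[ℝ]) := by
    rw [← mul_assoc, ← coe_commutes, mul_assoc, star_mul_self, coe_mul]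
  rw [zero_mul, add_zero, zero_add, hneg] at hshift
  have := congrArg QuaternionAlgebra.re hshift
  rw [re_add, re_coe, re_coe] at this
  linarith

theorem re_herm_self_nonneg : 0 ≤ (herm z z).re := by
  obtain ⟨c, -, h⟩ := hp.exists_re_herm_self_eq hz₁ hz₂
  rw [h]
  exact add_nonneg (Finset.sum_nonneg fun i _ => normSq_nonneg)
    (mul_nonneg zero_le_two normSq_nonneg)

theorem eq_zero_of_herm_self_eq_zero (hzz : herm z z = 0) : z = 0 := by
  obtain ⟨c, hc, h⟩ := hp.exists_re_herm_self_eq hz₁ hz₂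
  rw [hzz, re_zero] at h
  have hsum : 0 ≤ ∑ i ∈ Finset.Ioo 0 (Fin.last n), normSq ((z + op c • (m₁ - m₂)) i) :=
    Finset.sum_nonneg fun i _ => normSq_nonneg
  have hc0 : c = 0 := normSq_eq_zero.mp (by linarith [normSq_nonneg (a := c)])
  have hsum0 : ∑ i ∈ Finset.Ioo 0 (Fin.last n), normSq ((z + op c • (m₁ - m₂)) i) = 0 := by
    linarith [normSq_nonneg (a := c)]
  have hmid : ∀ i ∈ Finset.Ioo 0 (Fin.last n), z i = 0 := fun i hi => by
    simpa [hc0] using (Finset.sum_eq_zero_iff_of_nonneg fun i _ => normSq_nonneg).mp hsum0 i hi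
  have hfirst : z 0 = 0 := by simpa [hc0] using hc
  have hlast : z (Fin.last n) = 0 := by
    have hzw : herm z (m₁ - m₂) = 0 := by rw [herm_sub_right, hz₁, hz₂, sub_zero]
    rw [herm_eq_hermMid, hfirst, hermMid,
      Finset.sum_eq_zero fun i hi => by rw [hmid i hi, mul_zero], mul_zero, add_zero,
      add_zero] at hzw
    exact (mul_eq_zero.mp hzw).resolve_left (star_ne_zero.mpr hp.sub_apply_zero_ne_zero)
  ext1 i
  rcases eq_or_ne i 0 with rfl | h0
  · exact hfirst
  rcases eq_or_ne i (Fin.last n) with rfl | hl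
  · exact hlast
  exact hmid i (Finset.mem_Ioo.mpr ⟨Fin.pos_of_ne_zero h0, Fin.lt_last_iff_ne_last.mpr hl⟩)

end Orthogonal

variable {u v : Fin (n+1) → ℍ[ℝ]}
  (hu₁ : herm u m₁ = 0) (hu₂ : herm u m₂ = 0) (hv₁ : herm v m₁ = 0) (hv₂ : herm v m₂ = 0)
  {A B : ℝ} (hA : herm u u = A) (hB : herm v v = B)
include hu₁ hu₂ hv₁ hv₂ hA hB

theorem normSq_herm_le : normSq (herm u v) ≤ A * B := by
  have hA0 : 0 ≤ A := by simpa [hA] using hp.re_herm_self_nonneg hu₁ hu₂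
  rcases hA0.eq_or_lt with rfl | hApos
  · simp [hp.eq_zero_of_herm_self_eq_zero hu₁ hu₂ (by simpa using hA)]
  · have := hp.re_herm_self_nonneg (z := op (A : ℍ[ℝ]) • v - op (star (herm u v)) • u)
      (by simp only [herm_sub_left, herm_smul_left, hu₁, hv₁, zero_mul, sub_zero])
      (by simp only [herm_sub_left, herm_smul_left, hu₂, hv₂, zero_mul, sub_zero])
    rw [herm_self_smul_sub_smul hA hB, re_coe] at this
    linarith [nonneg_of_mul_nonneg_right this hApos]

theorem normSq_herm_eq_iff :
    normSq (herm u v) = A * B ↔ ∃ c d : ℍ[ℝ], (c ≠ 0 ∨ d ≠ 0) ∧ op c • u + op d • v = 0 := by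
  refine ⟨fun h => ?_, fun ⟨c, d, hcd, hdep⟩ => normSq_herm_eq_of_dependent hA hB hcd hdep⟩
  have hA0 : 0 ≤ A := by simpa [hA] using hp.re_herm_self_nonneg hu₁ hu₂
  rcases hA0.eq_or_lt with rfl | hApos
  · exact ⟨1, 0, Or.inl one_ne_zero,
      by simp [hp.eq_zero_of_herm_self_eq_zero hu₁ hu₂ (by simpa using hA)]⟩
  · refine ⟨-star (herm u v), A, Or.inr (by rw [Ne, ← coe_zero, coe_inj]; exact hApos.ne'), ?_⟩
    have := hp.eq_zero_of_herm_self_eq_zero (z := op (A : ℍ[ℝ]) • v - op (star (herm u v)) • u)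
      (by simp only [herm_sub_left, herm_smul_left, hu₁, hv₁, zero_mul, sub_zero])
      (by simp only [herm_sub_left, herm_smul_left, hu₂, hv₂, zero_mul, sub_zero])
      (by rw [herm_self_smul_sub_smul hA hB, h, sub_self, mul_zero, coe_zero])
    rw [← this, op_neg, neg_smul, sub_eq_neg_add]

end IsHyperbolicPair

theorem IsHyperbolicPair.exists_sum_smul_eq_zero_iff {m : Fin 4 → Fin (n+1) → ℍ[ℝ]}
    (hp : IsHyperbolicPair (m 1) (m 2)) :
    (∃ lam : Fin 4 → ℍ[ℝ], lam ≠ 0 ∧ ∑ i, op (lam i) • m i = 0) ↔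
      ∃ c d : ℍ[ℝ], (c ≠ 0 ∨ d ≠ 0) ∧
        op c • orthProj (m 1) (m 2) (m 0) + op d • orthProj (m 1) (m 2) (m 3) = 0 := by
  set u := orthProj (m 1) (m 2) (m 0)
  set v := orthProj (m 1) (m 2) (m 3)
  have hsum (lam : Fin 4 → ℍ[ℝ]) : ∑ i, op (lam i) • m i
      = (op (lam 0) • u + op (lam 3) • v)
        + op (herm (m 0) (m 2) * lam 0 + lam 1 + herm (m 3) (m 2) * lam 3) • m 1
        + op (herm (m 0) (m 1) * lam 0 + lam 2 + herm (m 3) (m 1) * lam 3) • m 2 := by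
    funext x
    simp only [u, v, orthProj, Fin.sum_univ_four, Finset.sum_apply, Pi.add_apply, Pi.sub_apply,
      Pi.smul_apply, op_smul_eq_mul]
    noncomm_ring
  have hperp₁ (c d : ℍ[ℝ]) : herm (op c • u + op d • v) (m 1) = 0 := by
    simp [u, v, hp.herm_orthProj_fst]
  have hperp₂ (c d : ℍ[ℝ]) : herm (op c • u + op d • v) (m 2) = 0 := by
    simp [u, v, hp.herm_orthProj_snd]
  constructor
  · rintro ⟨lam, hlam, h⟩
    obtain ⟨huv, h1, h2⟩ := (hp.add_smul_add_smul_eq_zero_iff (hperp₁ _ _) (hperp₂ _ _) _ _).mp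
      ((hsum lam).symm.trans h)
    refine ⟨lam 0, lam 3, ?_, huv⟩
    by_contra! h03
    refine hlam (funext fun i => ?_)
    fin_cases i
    · exact h03.1
    · simpa [h03] using h1
    · simpa [h03] using h2
    · exact h03.2
  · rintro ⟨c, d, hcd, h⟩
    refine ⟨![c, -(herm (m 0) (m 2) * c + herm (m 3) (m 2) * d),
      -(herm (m 0) (m 1) * c + herm (m 3) (m 1) * d), d], fun h0 => ?_, ?_⟩
    · rcases hcd with hc | hd
      · exact hc (congrFun h0 0)
      · exact hd (congrFun h0 3)
    · rw [hsum]
      simp [h]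

theorem exists_sum_op_smul_eq_zero {ι : Type*} [Fintype ι] {k : ℕ} (m : ι → Fin k → ℍ[ℝ])
    (h : k < Fintype.card ι) : ∃ lam : ι → ℍ[ℝ], lam ≠ 0 ∧ ∑ i, op (lam i) • m i = 0 := by
  let e : (Fin k → ℍ[ℝ]) ≃ₗ[ℍ[ℝ]ᵐᵒᵖ] (Fin k → ℍ[ℝ]ᵐᵒᵖ) :=
    LinearEquiv.piCongrRight fun _ => { opAddEquiv with map_smul' := fun c x => by simp }
  have : ¬ LinearIndependent ℍ[ℝ]ᵐᵒᵖ m := fun hli => by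
    have := (hli.map' _ e.ker).fintype_card_le_finrank
    rw [Module.finrank_fin_fun] at this
    omega
  obtain ⟨g, hg, i, hi⟩ := Fintype.not_linearIndependent_iff.mp this
  exact ⟨fun i => unop (g i), fun h0 => hi (by simpa using congrFun h0 i), hg⟩

theorem sum_op_smul_eq {ι : Type*} [Fintype ι] {k : ℕ} (m : ι → Fin k → ℍ[ℝ])
    (lam : ι → ℍ[ℝ]) : ∑ i, op (lam i) • m i = fun x => ∑ i, m i x * lam i := by
  funext x
  simp [Finset.sum_apply]

structure NormalizedGram (m : Fin 4 → Fin (n+1) → ℍ[ℝ]) (ε κ₁ κ₂ : ℍ[ℝ]) : Prop where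
  null : ∀ i, herm (m i) (m i) = 0
  herm_zero_one : herm (m 0) (m 1) = 1
  herm_one_two : herm (m 1) (m 2) = 1
  herm_two_three : herm (m 2) (m 3) = 1
  herm_zero_two : herm (m 0) (m 2) = -ε
  herm_zero_three : herm (m 0) (m 3) = κ₁
  herm_one_three : herm (m 1) (m 3) = κ₂

namespace NormalizedGram

variable {m : Fin 4 → Fin (n+1) → ℍ[ℝ]} {ε κ₁ κ₂ : ℍ[ℝ]} (hm : NormalizedGram m ε κ₁ κ₂)
include hm

theorem ne_zero (i : Fin 4) : m i ≠ 0 := by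
  fin_cases i <;> intro h <;> simp only [Fin.zero_eta, Fin.mk_one, Fin.reduceFinMk] at h
  · simpa [h] using hm.herm_zero_one
  · simpa [h] using hm.herm_one_two
  · simpa [h] using hm.herm_two_three
  · simpa [h] using hm.herm_two_three

theorem isHyperbolicPair : IsHyperbolicPair (m 1) (m 2) :=
  ⟨hm.null 1, hm.null 2, hm.herm_one_two⟩

theorem herm_orthProj_zero_self :
    herm (orthProj (m 1) (m 2) (m 0)) (orthProj (m 1) (m 2) (m 0))
      = ((2 * ε.re : ℝ) : ℍ[ℝ]) := by
  rw [hm.isHyperbolicPair.herm_orthProj_orthProj, ← herm_star (m 0) (m 1),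
    ← herm_star (m 0) (m 2), hm.null 0, hm.herm_zero_one, hm.herm_zero_two, ← self_add_star']
  simp

theorem herm_orthProj_three_self :
    herm (orthProj (m 1) (m 2) (m 3)) (orthProj (m 1) (m 2) (m 3))
      = ((-2 * κ₂.re : ℝ) : ℍ[ℝ]) := by
  rw [hm.isHyperbolicPair.herm_orthProj_orthProj, ← herm_star (m 1) (m 3),
    ← herm_star (m 2) (m 3), hm.null 3, hm.herm_one_three, hm.herm_two_three, neg_mul, coe_neg,
    ← self_add_star']
  simp
  abel

theorem herm_orthProj_zero_three :
    herm (orthProj (m 1) (m 2) (m 0)) (orthProj (m 1) (m 2) (m 3)) = κ₁ + κ₂ * ε - 1 := by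
  rw [hm.isHyperbolicPair.herm_orthProj_orthProj, hm.herm_zero_three, hm.herm_one_three,
    hm.herm_two_three, hm.herm_zero_two, hm.herm_zero_one]
  noncomm_ring

theorem normSq_le : normSq (κ₁ + κ₂ * ε - 1) ≤ (2 * ε.re) * (-2 * κ₂.re) := by
  have hp := hm.isHyperbolicPair
  rw [← hm.herm_orthProj_zero_three]
  exact hp.normSq_herm_le (hp.herm_orthProj_fst _) (hp.herm_orthProj_snd _)
    (hp.herm_orthProj_fst _) (hp.herm_orthProj_snd _) hm.herm_orthProj_zero_self
    hm.herm_orthProj_three_self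

theorem exists_sum_smul_eq_zero_iff :
    (∃ lam : Fin 4 → ℍ[ℝ], lam ≠ 0 ∧ ∑ i, op (lam i) • m i = 0) ↔
      normSq (κ₁ + κ₂ * ε - 1) = (2 * ε.re) * (-2 * κ₂.re) := by
  have hp := hm.isHyperbolicPair
  rw [hp.exists_sum_smul_eq_zero_iff, ← hm.herm_orthProj_zero_three]
  exact (hp.normSq_herm_eq_iff (hp.herm_orthProj_fst _) (hp.herm_orthProj_snd _)
    (hp.herm_orthProj_fst _) (hp.herm_orthProj_snd _) hm.herm_orthProj_zero_self
    hm.herm_orthProj_three_self).symm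

end NormalizedGram

def withEnds (a : ℍ[ℝ]) (x : Fin (n+1) → ℍ[ℝ]) (b : ℍ[ℝ]) : Fin (n+1) → ℍ[ℝ] :=
  fun i => if i = 0 then a else if i = Fin.last n then b else x i

theorem herm_withEnds (hn : 0 < n) (a b a' b' : ℍ[ℝ]) (x y : Fin (n+1) → ℍ[ℝ]) :
    herm (withEnds a x b) (withEnds a' y b') = star a' * b + hermMid x y + star b' * a := by
  have hlast : Fin.last n ≠ 0 := Fin.ext_iff.not.mpr (by simp; omega)
  have hmid : hermMid (withEnds a x b) (withEnds a' y b') = hermMid x y :=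
    Finset.sum_congr rfl fun i hi => by
      obtain ⟨h0, hl⟩ := Finset.mem_Ioo.mp hi
      simp [withEnds, h0.ne', hl.ne]
  rw [herm_eq_hermMid, hmid]
  simp [withEnds, hlast]

theorem normalizedGram_withEnds (hn : 0 < n) {ε κ₁ κ₂ : ℍ[ℝ]} {x y : Fin (n+1) → ℍ[ℝ]}
    (hx : hermMid x x = ε + star ε) (hy : hermMid y y = -(κ₂ + star κ₂))
    (hxy : hermMid x y = κ₁ + κ₂ * ε - 1) :
    NormalizedGram ![withEnds (-ε) x 1, withEnds 1 0 0, withEnds 0 0 1, withEnds 1 y (star κ₂)]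
      ε κ₁ κ₂ where
  null i := by
    fin_cases i <;> simp [herm_withEnds hn, hx, hy]
  herm_zero_one := by simp [herm_withEnds hn]
  herm_one_two := by simp [herm_withEnds hn]
  herm_two_three := by simp [herm_withEnds hn]
  herm_zero_two := by simp [herm_withEnds hn]
  herm_zero_three := by simp [herm_withEnds hn, hxy]
  herm_one_three := by simp [herm_withEnds hn]

theorem exists_normSq_eq_star_mul_eq {A B : ℝ} (hA : 0 ≤ A) (hB : 0 ≤ B) {s : ℍ[ℝ]}
    (h : normSq s = A * B) : ∃ p q : ℍ[ℝ], normSq p = A ∧ normSq q = B ∧ star q * p = s := by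
  rcases hA.eq_or_lt with rfl | hA
  · refine ⟨0, (√B : ℝ), by simp, by rw [normSq_coe, Real.sq_sqrt hB], ?_⟩
    rw [zero_mul, normSq_eq_zero] at h
    simp [h]
  · refine ⟨(√A : ℝ), star s * ((√A)⁻¹ : ℝ), by rw [normSq_coe, Real.sq_sqrt hA.le], ?_, ?_⟩
    · rw [map_mul, normSq_star, normSq_coe, h, inv_pow, Real.sq_sqrt hA.le]
      field_simp
    · rw [star_mul, star_star, star_coe, mul_assoc, ← coe_commutes, ← mul_assoc, ← coe_mul,
        inv_mul_cancel₀ (Real.sqrt_pos.mpr hA).ne', coe_one, one_mul]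

theorem exists_normSq_add_eq_star_mul_eq {A B : ℝ} (hA : 0 ≤ A) (hB : 0 ≤ B) {s : ℍ[ℝ]}
    (h : normSq s ≤ A * B) :
    ∃ p q r : ℍ[ℝ], normSq p = A ∧ normSq q + normSq r = B ∧ star q * p = s := by
  have hB' : normSq s / A ≤ B := div_le_of_le_mul₀ hA hB (by linarith)
  have hs : normSq s = A * (normSq s / A) := by
    rcases hA.eq_or_lt with rfl | hA
    · simp only [zero_mul] at h ⊢
      linarith [normSq_nonneg (a := s)]
    · field_simp
  obtain ⟨p, q, hp, hq, hpq⟩ := exists_normSq_eq_star_mul_eq hA (div_nonneg normSq_nonneg hA) hs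
  refine ⟨p, q, (√(B - normSq s / A) : ℝ), hp, ?_, hpq⟩
  rw [normSq_coe, Real.sq_sqrt (by linarith), hq]
  ring

theorem exists_normalizedGram_of_normSq_eq (hn : 1 < n) {ε κ₁ κ₂ : ℍ[ℝ]} (hε : 0 ≤ ε.re)
    (hκ₂ : κ₂.re ≤ 0) (h : normSq (κ₁ + κ₂ * ε - 1) = (2 * ε.re) * (-2 * κ₂.re)) :
    ∃ m : Fin 4 → Fin (n+1) → ℍ[ℝ], NormalizedGram m ε κ₁ κ₂ := by
  obtain ⟨p, q, hp, hq, hpq⟩ := exists_normSq_eq_star_mul_eq (by linarith) (by linarith) h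
  have hi : (⟨1, by omega⟩ : Fin (n+1)) ∈ Finset.Ioo 0 (Fin.last n) := by
    simp [Finset.mem_Ioo, Fin.lt_def]; omega
  refine ⟨_, normalizedGram_withEnds (by omega) (x := Pi.single ⟨1, by omega⟩ p)
    (y := Pi.single ⟨1, by omega⟩ q) ?_ ?_ ?_⟩
  · rw [hermMid_single_single hi, if_pos rfl, star_mul_self, hp, self_add_star']
  · rw [hermMid_single_single hi, if_pos rfl, star_mul_self, hq, self_add_star', ← coe_neg, neg_mul]
  · rw [hermMid_single_single hi, if_pos rfl, hpq]

theorem exists_normalizedGram_of_normSq_le (hn : 2 < n) {ε κ₁ κ₂ : ℍ[ℝ]} (hε : 0 ≤ ε.re)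
    (hκ₂ : κ₂.re ≤ 0) (h : normSq (κ₁ + κ₂ * ε - 1) ≤ (2 * ε.re) * (-2 * κ₂.re)) :
    ∃ m : Fin 4 → Fin (n+1) → ℍ[ℝ], NormalizedGram m ε κ₁ κ₂ := by
  obtain ⟨p, q, r, hp, hqr, hpq⟩ :=
    exists_normSq_add_eq_star_mul_eq (by linarith) (by linarith) h
  set i₁ : Fin (n+1) := ⟨1, by omega⟩
  set i₂ : Fin (n+1) := ⟨2, by omega⟩
  have hi₁ : i₁ ∈ Finset.Ioo 0 (Fin.last n) := by
    simp [i₁, Finset.mem_Ioo, Fin.lt_def]; omega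
  have hi₂ : i₂ ∈ Finset.Ioo 0 (Fin.last n) := by
    simp [i₂, Finset.mem_Ioo, Fin.lt_def]; omega
  have hne : i₁ ≠ i₂ := by simp [i₁, i₂]
  refine ⟨_, normalizedGram_withEnds (by omega) (x := Pi.single i₁ p)
    (y := Pi.single i₁ q + Pi.single i₂ r) ?_ ?_ ?_⟩
  · rw [hermMid_single_single hi₁, if_pos rfl, star_mul_self, hp, self_add_star']
  · simp only [hermMid_add_left, hermMid_add_right, hermMid_single_single hi₁,
      hermMid_single_single hi₂, if_pos, hne, hne.symm, if_false, star_mul_self]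
    rw [add_zero, zero_add, ← coe_add, hqr, self_add_star', ← coe_neg, neg_mul]
  · simp only [hermMid_add_right, hermMid_single_single hi₁, hne, if_pos, if_false, add_zero,
      hpq]

theorem realizable_iff {α : ℝ} {κ₁ κ₂ : ℍ[ℝ]} :
    Realizable n α κ₁ κ₂ ↔ ∃ m : Fin 4 → Fin (n+1) → ℍ[ℝ], NormalizedGram m (eI α) κ₁ κ₂ :=
  ⟨fun ⟨m, _, hnull, h01, h12, h23, h02, h03, h13⟩ => ⟨m, ⟨hnull, h01, h12, h23, h02, h03, h13⟩⟩,
    fun ⟨m, hm⟩ => ⟨m, hm.ne_zero, hm.1, hm.2, hm.3, hm.4, hm.5, hm.6, hm.7⟩⟩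

end

theorem normSq_eI (α : ℝ) : normSq (eI α) = 1 := by
  rw [normSq_def']
  simp [eI]

theorem eI_neg (α : ℝ) : eI (-α) = star (eI α) := by
  ext <;> simp only [re_star, imI_star, imJ_star, imK_star] <;> simp [eI]

theorem expansion_eq_normSq_sub (κ₁ κ₂ ε : ℍ[ℝ]) (hε : normSq ε = 1) :
    1 + ‖κ₁‖^2 + ‖κ₂‖^2 - 2 * κ₁.re + 2 * (κ₂ * star ε).re + 2 * (star κ₁ * κ₂ * ε).re
      = normSq (κ₁ + κ₂ * ε - 1) - (2 * ε.re) * (-2 * κ₂.re) := by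
  rw [sq, sq, ← normSq_eq_norm_mul_self, ← normSq_eq_norm_mul_self]
  rw [normSq_def'] at hε
  simp only [normSq_def', re_mul, imI_mul, imJ_mul, imK_mul, re_add, imI_add, imJ_add, imK_add,
    re_sub, imI_sub, imJ_sub, imK_sub, re_one, imI_one, imJ_one, imK_one, re_star, imI_star,
    imJ_star, imK_star]
  linear_combination -(κ₂.re ^ 2 + κ₂.imI ^ 2 + κ₂.imJ ^ 2 + κ₂.imK ^ 2) * hε

theorem stmt18_general (α : ℝ) (hα : α ∈ Set.Icc 0 (Real.pi/2))
    (κ₁ κ₂ : ℍ[ℝ])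
    (h2 : κ₂.re ≤ 0)
    (D : ℝ)
    (hD : D = 1 + ‖κ₁‖^2 + ‖κ₂‖^2 - 2 * κ₁.re
              + 2 * (κ₂ * eI (-α)).re + 2 * (star κ₁ * κ₂ * eI α).re) :
    (Realizable 2 α κ₁ κ₂ ↔ D = 0)
    ∧ (∀ n : ℕ, 2 < n →
        ((Realizable n α κ₁ κ₂ ↔ D ≤ 0)
          ∧ ∀ m : Fin 4 → Fin (n+1) → ℍ[ℝ],
              ((∀ i, m i ≠ 0) ∧ (∀ i, herm (m i) (m i) = 0) ∧
               herm (m 0) (m 1) = 1 ∧ herm (m 1) (m 2) = 1 ∧ herm (m 2) (m 3) = 1 ∧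
               herm (m 0) (m 2) = -(eI α) ∧ herm (m 0) (m 3) = κ₁ ∧
               herm (m 1) (m 3) = κ₂) →
              (D = 0 ↔ ∃ lam : Fin 4 → ℍ[ℝ], lam ≠ 0 ∧
                  (fun x => ∑ i : Fin 4, m i x * lam i) = 0))) := by
  have hε : 0 ≤ (eI α).re := Real.cos_nonneg_of_mem_Icc ⟨by linarith [hα.1, Real.pi_pos], hα.2⟩
  rw [eI_neg, expansion_eq_normSq_sub κ₁ κ₂ _ (normSq_eI α)] at hD
  refine ⟨?_, fun n hn => ⟨?_, fun m ⟨_, hnull, h01, h12, h23, h02, h03, h13⟩ => ?_⟩⟩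
  · rw [realizable_iff]
    refine ⟨fun ⟨m, hm⟩ => ?_,
      fun h => exists_normalizedGram_of_normSq_eq one_lt_two hε h2 (by linarith)⟩
    obtain ⟨lam, hlam, hdep⟩ := exists_sum_op_smul_eq_zero m (by simp)
    rw [hD, hm.exists_sum_smul_eq_zero_iff.mp ⟨lam, hlam, hdep⟩, sub_self]
  · rw [realizable_iff]
    exact ⟨fun ⟨m, hm⟩ => by linarith [hm.normSq_le],
      fun h => exists_normalizedGram_of_normSq_le hn hε h2 (by linarith)⟩
  · simp only [hD, sub_eq_zero, ← sum_op_smul_eq,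
      (NormalizedGram.mk hnull h01 h12 h23 h02 h03 h13).exists_sum_smul_eq_zero_iff]

/-- with `κ₁ = c₁ + t·j`, `κ₂ = c₂ + c₃·j` subject to the stated restrictions and
`D = 1 + |κ₁|² + |κ₂|² − 2Re κ₁ + 2Re(κ₂e^{−iα}) + 2Re(κ̄₁κ₂e^{iα})`:
(a) the data is realizable in dimension 2 iff `D = 0`; (b) for `n > 2` it is realizable iff
`D ≤ 0`, and for any realizing quadruple, `D = 0` iff the quadruple is right-linearly
dependent. -/
theorem stmt18 (α : ℝ) (hα : α ∈ Set.Icc 0 (Real.pi/2))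
    (c₁ c₂ c₃ : ℂ) (t : ℝ) (ht : 0 ≤ t)
    (κ₁ κ₂ : ℍ[ℝ])
    (hκ₁ : κ₁ = cq c₁ + ((t : ℝ) : ℍ[ℝ]) * jj) (hκ₂ : κ₂ = cq c₂ + cq c₃ * jj)
    (h1 : (κ₁ * star κ₂).re ≤ 0) (h2 : κ₂.re ≤ 0) (h3 : κ₁ ≠ 0) (h4 : κ₂ ≠ 0)
    (D : ℝ)
    (hD : D = 1 + ‖κ₁‖^2 + ‖κ₂‖^2 - 2 * κ₁.re
              + 2 * (κ₂ * eI (-α)).re + 2 * (star κ₁ * κ₂ * eI α).re) :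
    (Realizable 2 α κ₁ κ₂ ↔ D = 0)
    ∧ (∀ n : ℕ, 2 < n →
        ((Realizable n α κ₁ κ₂ ↔ D ≤ 0)
          ∧ ∀ m : Fin 4 → Fin (n+1) → ℍ[ℝ],
              ((∀ i, m i ≠ 0) ∧ (∀ i, herm (m i) (m i) = 0) ∧
               herm (m 0) (m 1) = 1 ∧ herm (m 1) (m 2) = 1 ∧ herm (m 2) (m 3) = 1 ∧
               herm (m 0) (m 2) = -(eI α) ∧ herm (m 0) (m 3) = κ₁ ∧
               herm (m 1) (m 3) = κ₂) →
              (D = 0 ↔ ∃ lam : Fin 4 → ℍ[ℝ], lam ≠ 0 ∧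
                  (fun x => ∑ i : Fin 4, m i x * lam i) = 0))) :=
  stmt18_general α hα κ₁ κ₂ h2 D hD
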